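/- For every x ∈ ℝ^d, W2²(x) ≥ (1/N) · (max(‖x‖_∞ − ‖x̃‖_∞, 0))², where ‖·‖_∞ denotes the maximum absolute value of the entries of a vector. -/

import Mathlib

open scoped BigOperators
open MeasureTheory

/-- The patch operator: extract coordinates along an index map. -/
noncomputable def patch {d s : ℕ} (ι : Fin s → Fin d) (x : EuclideanSpace ℝ (Fin d)) :
    EuclideanSpace ℝ (Fin s) :=
  WithLp.toLp 2 (fun l => x (ι l))

/-- The set of couplings between the uniform measures on `Fin N` and `Fin Nt`. -/
def couplings (N Nt : ℕ) : Set (Matrix (Fin N) (Fin Nt) ℝ) :=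
  {π | (∀ j k, 0 ≤ π j k) ∧ (∀ k, ∑ j, π j k = 1 / (Nt : ℝ)) ∧
    (∀ j, ∑ k, π j k = 1 / (N : ℝ))}

/-- Squared Wasserstein-2 distance between the empirical patch distribution of `x`
and that of the reference image `xt`. -/
noncomputable def W2sq {d dt s N Nt : ℕ} (ι : Fin N → Fin s → Fin d)
    (ιt : Fin Nt → Fin s → Fin dt) (xt : EuclideanSpace ℝ (Fin dt))
    (x : EuclideanSpace ℝ (Fin d)) : ℝ :=
  sInf ((fun π : Matrix (Fin N) (Fin Nt) ℝ =>
    ∑ j, ∑ k, ‖patch (ι j) x - patch (ιt k) xt‖ ^ 2 * π j k) '' couplings N Nt)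

/-- The maximum absolute value of the entries of a vector (`‖·‖_∞`). -/
noncomputable def supNorm {d : ℕ} (hd : 0 < d) (x : EuclideanSpace ℝ (Fin d)) : ℝ :=
  (Finset.univ : Finset (Fin d)).sup' (Finset.univ_nonempty_iff.mpr ⟨⟨0, hd⟩⟩)
    fun i => |x i|

/-!
Take a coordinate `i₀` where `|x i₀| = ‖x‖_∞` and a patch `j₀` of `x` containing it. Every patch
of `x̃` differs from patch `j₀` in that coordinate by at least `‖x‖_∞ - ‖x̃‖_∞`, and any coupling
puts total mass `1 / N` on row `j₀`.
-/

/-- The independent coupling `π j k = 1 / (N * Nt)`. -/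
theorem couplings_nonempty {N Nt : ℕ} (hN : 0 < N) (hNt : 0 < Nt) :
    (couplings N Nt).Nonempty := by
  refine ⟨fun _ _ => 1 / (N * Nt : ℝ), fun _ _ => by positivity, fun _ => ?_, fun _ => ?_⟩ <;>
  · simp only [Finset.sum_const, Finset.card_univ, Fintype.card_fin, nsmul_eq_mul]
    field_simp

theorem one_div_mul_le_sum_mul_of_mem_couplings {N Nt : ℕ} {π : Matrix (Fin N) (Fin Nt) ℝ}
    (hπ : π ∈ couplings N Nt) {c : Fin N → Fin Nt → ℝ} (hc : ∀ j k, 0 ≤ c j k)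
    {m : ℝ} (j₀ : Fin N) (hm : ∀ k, m ≤ c j₀ k) :
    1 / (N : ℝ) * m ≤ ∑ j, ∑ k, c j k * π j k := by
  obtain ⟨hpos, -, hrow⟩ := hπ
  calc 1 / (N : ℝ) * m = ∑ k, m * π j₀ k := by rw [← Finset.mul_sum, hrow j₀, mul_comm]
    _ ≤ ∑ k, c j₀ k * π j₀ k :=
        Finset.sum_le_sum fun k _ => mul_le_mul_of_nonneg_right (hm k) (hpos j₀ k)
    _ ≤ ∑ j, ∑ k, c j k * π j k :=
        Finset.single_le_sum (f := fun j => ∑ k, c j k * π j k)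
          (fun j _ => Finset.sum_nonneg fun k _ => mul_nonneg (hc j k) (hpos j k))
          (Finset.mem_univ j₀)

theorem one_div_mul_le_W2sq {d dt s N Nt : ℕ} (hN : 0 < N) (hNt : 0 < Nt)
    (ι : Fin N → Fin s → Fin d) (ιt : Fin Nt → Fin s → Fin dt)
    (xt : EuclideanSpace ℝ (Fin dt)) (x : EuclideanSpace ℝ (Fin d)) {m : ℝ} (j₀ : Fin N)
    (hm : ∀ k, m ≤ ‖patch (ι j₀) x - patch (ιt k) xt‖ ^ 2) :
    1 / (N : ℝ) * m ≤ W2sq ι ιt xt x := by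
  refine le_csInf ((couplings_nonempty hN hNt).image _) ?_
  rintro _ ⟨π, hπ, rfl⟩
  exact one_div_mul_le_sum_mul_of_mem_couplings hπ (fun _ _ => by positivity) j₀ hm

theorem abs_sub_le_norm_patch_sub {d dt s : ℕ} (ι : Fin s → Fin d) (ιt : Fin s → Fin dt)
    (x : EuclideanSpace ℝ (Fin d)) (xt : EuclideanSpace ℝ (Fin dt)) (l : Fin s) :
    |x (ι l) - xt (ιt l)| ≤ ‖patch ι x - patch ιt xt‖ :=
  PiLp.norm_apply_le (patch ι x - patch ιt xt) l

theorem abs_le_supNorm {d : ℕ} (hd : 0 < d) (x : EuclideanSpace ℝ (Fin d)) (i : Fin d) :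
    |x i| ≤ supNorm hd x :=
  Finset.le_sup' (fun i => |x i|) (Finset.mem_univ i)

theorem exists_abs_eq_supNorm {d : ℕ} (hd : 0 < d) (x : EuclideanSpace ℝ (Fin d)) :
    ∃ i, |x i| = supNorm hd x := by
  obtain ⟨i, -, hi⟩ := Finset.exists_mem_eq_sup' _ (fun i : Fin d => |x i|)
  exact ⟨i, hi.symm⟩

theorem max_supNorm_sub_le_abs_sub {d dt : ℕ} (hd : 0 < d) (hdt : 0 < dt)
    {x : EuclideanSpace ℝ (Fin d)} {i : Fin d} (hi : |x i| = supNorm hd x)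
    (xt : EuclideanSpace ℝ (Fin dt)) (i' : Fin dt) :
    max (supNorm hd x - supNorm hdt xt) 0 ≤ |x i - xt i'| := by
  refine max_le ?_ (abs_nonneg _)
  calc supNorm hd x - supNorm hdt xt ≤ |x i| - |xt i'| := by
        linarith [abs_le_supNorm hdt xt i']
    _ ≤ |x i - xt i'| := abs_sub_abs_le_abs_sub _ _

theorem W2sq_ge_supNorm_bound_general (d dt s N Nt : ℕ)
    (hd : 0 < d) (hdt : 0 < dt) (hN : 0 < N) (hNt : 0 < Nt)
    (ι : Fin N → Fin s → Fin d)
    (ιt : Fin Nt → Fin s → Fin dt)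
    (xt : EuclideanSpace ℝ (Fin dt))
    (hcover : ∀ i : Fin d, ∃ j l, ι j l = i)
    (x : EuclideanSpace ℝ (Fin d)) :
    (1 / (N : ℝ)) * max (supNorm hd x - supNorm hdt xt) 0 ^ 2 ≤ W2sq ι ιt xt x := by
  obtain ⟨i₀, hi₀⟩ := exists_abs_eq_supNorm hd x
  obtain ⟨j₀, l₀, rfl⟩ := hcover i₀
  refine one_div_mul_le_W2sq hN hNt ι ιt xt x j₀ fun k => ?_
  exact pow_le_pow_left₀ (le_max_right _ _)
    ((max_supNorm_sub_le_abs_sub hd hdt hi₀ xt _).trans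
      (abs_sub_le_norm_patch_sub (ι j₀) (ιt k) x xt l₀)) 2

/-- If the patches cover every coordinate, then
`W2²(x) ≥ (1/N) · (max(‖x‖_∞ − ‖x̃‖_∞, 0))²`. -/
theorem W2sq_ge_supNorm_bound (d dt s N Nt : ℕ)
    (hd : 0 < d) (hdt : 0 < dt) (hs : 0 < s) (hN : 0 < N) (hNt : 0 < Nt)
    (ι : Fin N → Fin s → Fin d) (hι : ∀ j, Function.Injective (ι j))
    (ιt : Fin Nt → Fin s → Fin dt) (hιt : ∀ k, Function.Injective (ιt k))
    (xt : EuclideanSpace ℝ (Fin dt))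
    (hcover : ∀ i : Fin d, ∃ j l, ι j l = i)
    (x : EuclideanSpace ℝ (Fin d)) :
    (1 / (N : ℝ)) * max (supNorm hd x - supNorm hdt xt) 0 ^ 2 ≤ W2sq ι ιt xt x :=
  W2sq_ge_supNorm_bound_general d dt s N Nt hd hdt hN hNt ι ιt xt hcover x
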